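/- For the Bell-state measurement Φ = (|Φ^b⟩⟨Φ^b|)_{b=0}^3 on C²⊗C², the separability threshold satisfies Q_sep(Φ) = 1/2: any separable 4-outcome POVM (F^b) satisfies (1/4)Σ_b Tr(F^b Φ^b) ≤ 1/2, and this value is attained by a separable measurement. -/

import Mathlib

open Matrix ComplexOrder

noncomputable section

def IsSeparableOp (F : Matrix (Fin 2 × Fin 2) (Fin 2 × Fin 2) ℂ) : Prop :=
  ∃ (K : ℕ) (lam : Fin K → ℝ) (u : Fin K → Fin 2 → ℂ) (v : Fin K → Fin 2 → ℂ),
    (∀ k, 0 ≤ lam k) ∧ (∀ k, ∑ i, ‖u k i‖ ^ 2 = 1) ∧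
    (∀ k, ∑ i, ‖v k i‖ ^ 2 = 1) ∧
    F = ∑ k, (lam k : ℂ) •
      Matrix.vecMulVec (fun p => u k p.1 * v k p.2) (star fun p => u k p.1 * v k p.2)

def IsSeparablePOVM {d : ℕ} (F : Fin d → Matrix (Fin 2 × Fin 2) (Fin 2 × Fin 2) ℂ) : Prop :=
  (∀ j, IsSeparableOp (F j)) ∧ ∑ j, F j = 1

/-- Computational basis vector |i j⟩ of the two-qubit space. -/
def ket (i j : Fin 2) : Fin 2 × Fin 2 → ℂ := fun p => if p = (i, j) then 1 else 0

/-- The four Bell state vectors Φ⁰ = φ⁺, Φ¹ = φ⁻, Φ² = ψ⁺, Φ³ = ψ⁻. -/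
def bellVec : Fin 4 → Fin 2 × Fin 2 → ℂ
  | 0 => ((Real.sqrt 2)⁻¹ : ℂ) • (ket 0 0 + ket 1 1)
  | 1 => ((Real.sqrt 2)⁻¹ : ℂ) • (ket 0 0 - ket 1 1)
  | 2 => ((Real.sqrt 2)⁻¹ : ℂ) • (ket 0 1 + ket 1 0)
  | 3 => ((Real.sqrt 2)⁻¹ : ℂ) • (ket 0 1 - ket 1 0)

/-- The Bell state projectors. -/
def bellProj (b : Fin 4) : Matrix (Fin 2 × Fin 2) (Fin 2 × Fin 2) ℂ :=
  Matrix.vecMulVec (bellVec b) (star (bellVec b))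

/-! A product vector `u ⊗ v` has overlap `(u₀ v_σ₀ ± u₁ v_σ₁) / √2` with a Bell state, so by
Cauchy–Schwarz `|⟨Φᵇ|u ⊗ v⟩|² ≤ ‖u‖² ‖v‖² / 2`. Hence `Tr (F Φᵇ) ≤ Tr F / 2` for every separable
`F`, and summing over the outcomes, with `∑ Tr Fᵇ = Tr 1 = 4`, bounds the average by `1/2`.
Measuring in the computational basis, each Bell state paired with a basis vector in its
support, attains it. -/

section RankOne

variable {ι : Type*} [Fintype ι]

theorem trace_vecMulVec_star_self (w : ι → ℂ) :
    (vecMulVec w (star w)).trace = ((∑ i, ‖w i‖ ^ 2 : ℝ) : ℂ) := by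
  simp [dotProduct, Complex.mul_conj']

theorem trace_vecMulVec_star_mul_vecMulVec_star (w φ : ι → ℂ) :
    (vecMulVec w (star w) * vecMulVec φ (star φ)).trace = ((‖star φ ⬝ᵥ w‖ ^ 2 : ℝ) : ℂ) := by
  rw [vecMulVec_mul_vecMulVec, trace_vecMulVec, dotProduct_smul, smul_eq_mul, star_dotProduct,
    dotProduct_comm, mul_comm, Complex.ofReal_pow]
  exact Complex.mul_conj' _

theorem re_trace_sum_smul_vecMulVec_mul_le {κ : Type*} [Fintype κ]
    (lam : κ → ℝ) (w : κ → ι → ℂ) (φ : ι → ℂ) {c : ℝ} (hlam : ∀ k, 0 ≤ lam k)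
    (hw : ∀ k, ‖star φ ⬝ᵥ w k‖ ^ 2 ≤ c * ∑ i, ‖w k i‖ ^ 2) :
    ((∑ k, (lam k : ℂ) • vecMulVec (w k) (star (w k))) * vecMulVec φ (star φ)).trace.re ≤
      c * (∑ k, (lam k : ℂ) • vecMulVec (w k) (star (w k))).trace.re := by
  simp only [Finset.sum_mul, trace_sum, Complex.re_sum, smul_mul, trace_smul,
    trace_vecMulVec_star_mul_vecMulVec_star, trace_vecMulVec_star_self, smul_eq_mul,
    ← Complex.ofReal_mul, Complex.ofReal_re]
  rw [Finset.mul_sum]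
  refine Finset.sum_le_sum fun k _ => ?_
  calc lam k * ‖star φ ⬝ᵥ w k‖ ^ 2 ≤ lam k * (c * ∑ i, ‖w k i‖ ^ 2) :=
        mul_le_mul_of_nonneg_left (hw k) (hlam k)
    _ = c * (lam k * ∑ i, ‖w k i‖ ^ 2) := by ring

end RankOne

theorem sum_norm_mul_sq_prod {α β : Type*} [Fintype α] [Fintype β] (u : α → ℂ) (v : β → ℂ) :
    ∑ p : α × β, ‖u p.1 * v p.2‖ ^ 2 = (∑ i, ‖u i‖ ^ 2) * ∑ j, ‖v j‖ ^ 2 := by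
  simp only [Fintype.sum_prod_type, Finset.sum_mul_sum, norm_mul, mul_pow]

theorem Complex.norm_mul_add_mul_sq_le (a b c d : ℂ) :
    ‖a * b + c * d‖ ^ 2 ≤ (‖a‖ ^ 2 + ‖c‖ ^ 2) * (‖b‖ ^ 2 + ‖d‖ ^ 2) := by
  have htri : ‖a * b + c * d‖ ≤ ‖a‖ * ‖b‖ + ‖c‖ * ‖d‖ := by
    simpa only [norm_mul] using norm_add_le (a * b) (c * d)
  calc ‖a * b + c * d‖ ^ 2 ≤ (‖a‖ * ‖b‖ + ‖c‖ * ‖d‖) ^ 2 := by gcongr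
    _ ≤ (‖a‖ ^ 2 + ‖c‖ ^ 2) * (‖b‖ ^ 2 + ‖d‖ ^ 2) := by
      nlinarith [sq_nonneg (‖a‖ * ‖d‖ - ‖c‖ * ‖b‖)]

theorem ket_eq_single (i j : Fin 2) : ket i j = Pi.single (i, j) 1 := by
  funext p
  simp [ket, Pi.single_apply]

theorem star_ket_dotProduct (i j : Fin 2) (w : Fin 2 × Fin 2 → ℂ) :
    star (ket i j) ⬝ᵥ w = w (i, j) := by
  rw [ket_eq_single, ← Pi.single_star, star_one, single_one_dotProduct]

theorem norm_bellVec_dotProduct_prod_sq_le (b : Fin 4) (u v : Fin 2 → ℂ) :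
    ‖star (bellVec b) ⬝ᵥ (fun p => u p.1 * v p.2)‖ ^ 2 ≤
      1 / 2 * ∑ p : Fin 2 × Fin 2, ‖u p.1 * v p.2‖ ^ 2 := by
  have overlap_le (a c x y : ℂ) : ‖(√2 : ℂ)⁻¹ * (a * x + c * y)‖ ^ 2 ≤
      1 / 2 * ((‖a‖ ^ 2 + ‖c‖ ^ 2) * (‖x‖ ^ 2 + ‖y‖ ^ 2)) := by
    rw [norm_mul, mul_pow, norm_inv, Complex.norm_real, Real.norm_of_nonneg
      (Real.sqrt_nonneg 2), inv_pow, Real.sq_sqrt zero_le_two, one_div]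
    gcongr
    exact Complex.norm_mul_add_mul_sq_le a x c y
  rw [sum_norm_mul_sq_prod, Fin.sum_univ_two, Fin.sum_univ_two]
  fin_cases b <;>
    simp only [bellVec, star_smul, star_add, star_sub, smul_dotProduct, add_dotProduct,
      sub_dotProduct, star_ket_dotProduct, smul_eq_mul, Complex.star_def, map_inv₀,
      Complex.conj_ofReal]
  · exact overlap_le _ _ _ _
  · rw [sub_eq_add_neg, ← mul_neg]
    simpa only [norm_neg] using overlap_le (u 0) (u 1) (v 0) (-v 1)
  · rw [add_comm (‖v 0‖ ^ 2)]
    exact overlap_le _ _ _ _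
  · rw [add_comm (‖v 0‖ ^ 2), sub_eq_add_neg, ← mul_neg]
    simpa only [norm_neg] using overlap_le (u 0) (u 1) (v 1) (-v 0)

theorem IsSeparableOp.re_trace_mul_bellProj_le {M : Matrix (Fin 2 × Fin 2) (Fin 2 × Fin 2) ℂ}
    (hM : IsSeparableOp M) (b : Fin 4) :
    ((M * bellProj b).trace).re ≤ 1 / 2 * M.trace.re := by
  obtain ⟨K, lam, u, v, hlam, -, -, rfl⟩ := hM
  exact re_trace_sum_smul_vecMulVec_mul_le lam _ (bellVec b) hlam fun k =>
    norm_bellVec_dotProduct_prod_sq_le b (u k) (v k)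

theorem IsSeparablePOVM.sum_re_trace {d : ℕ}
    {F : Fin d → Matrix (Fin 2 × Fin 2) (Fin 2 × Fin 2) ℂ} (hF : IsSeparablePOVM F) :
    ∑ j, (F j).trace.re = 4 := by
  rw [← Complex.re_sum, ← trace_sum, hF.2, trace_one]
  norm_num

theorem IsSeparablePOVM.sum_re_trace_mul_bellProj_le
    {F : Fin 4 → Matrix (Fin 2 × Fin 2) (Fin 2 × Fin 2) ℂ} (hF : IsSeparablePOVM F) :
    ∑ b, ((F b * bellProj b).trace).re ≤ 2 :=
  calc ∑ b, ((F b * bellProj b).trace).re ≤ ∑ b, 1 / 2 * (F b).trace.re :=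
        Finset.sum_le_sum fun b _ => (hF.1 b).re_trace_mul_bellProj_le b
    _ = 2 := by rw [← Finset.mul_sum, hF.sum_re_trace]; norm_num

theorem isSeparableOp_single_one (i j : Fin 2) : IsSeparableOp (single (i, j) (i, j) 1) := by
  refine ⟨1, fun _ => 1, fun _ => Pi.single i 1, fun _ => Pi.single j 1, fun _ => zero_le_one,
    fun _ => by fin_cases i <;> simp, fun _ => by fin_cases j <;> simp, ?_⟩
  have hprod : (fun p : Fin 2 × Fin 2 =>
      (Pi.single i 1 : Fin 2 → ℂ) p.1 * (Pi.single j 1 : Fin 2 → ℂ) p.2) = Pi.single (i, j) 1 := by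
    funext p
    simp only [Pi.single_apply, Prod.ext_iff, mul_ite, mul_one, mul_zero, ite_and]
    split_ifs <;> rfl
  rw [Fin.sum_univ_one, Complex.ofReal_one, one_smul, hprod, single_eq_single_vecMulVec_single,
    ← Pi.single_star, star_one]

theorem isSeparablePOVM_single {d : ℕ} (e : Fin d ≃ Fin 2 × Fin 2) :
    IsSeparablePOVM fun b => single (e b) (e b) (1 : ℂ) :=
  ⟨fun _ => isSeparableOp_single_one _ _,
    by rw [e.sum_comp (fun p => single p p 1), sum_single_one]⟩

def bellPairing : Fin 4 ≃ Fin 2 × Fin 2 where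
  toFun := ![(0, 0), (1, 1), (0, 1), (1, 0)]
  invFun p := ![![0, 2], ![3, 1]] p.1 p.2
  left_inv := by decide
  right_inv := by decide

theorem re_trace_single_bellPairing_mul_bellProj (b : Fin 4) :
    ((single (bellPairing b) (bellPairing b) 1 * bellProj b).trace).re = 1 / 2 := by
  rw [trace_single_mul, one_smul, bellProj, vecMulVec_apply, Pi.star_apply, RCLike.star_def,
    Complex.mul_conj', ← Complex.ofReal_pow, Complex.ofReal_re]
  fin_cases b <;> simp [bellPairing, bellVec, ket]

theorem qsep_bell_state_measurement :
    (∀ F : Fin 4 → Matrix (Fin 2 × Fin 2) (Fin 2 × Fin 2) ℂ, IsSeparablePOVM F →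
      (1 / 4 : ℝ) * ∑ b, ((F b * bellProj b).trace).re ≤ 1 / 2) ∧
    (∃ F : Fin 4 → Matrix (Fin 2 × Fin 2) (Fin 2 × Fin 2) ℂ, IsSeparablePOVM F ∧
      (1 / 4 : ℝ) * ∑ b, ((F b * bellProj b).trace).re = 1 / 2) := by
  refine ⟨fun F hF => ?_, ?_⟩
  · linarith [hF.sum_re_trace_mul_bellProj_le]
  · refine ⟨fun b => single (bellPairing b) (bellPairing b) 1,
      isSeparablePOVM_single bellPairing, ?_⟩
    simp only [re_trace_single_bellPairing_mul_bellProj]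
    norm_num
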